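/- Let G' be the residual graph of the augmented graph under the local binary length function ℓ, where the edge (s, x_out) is the only outgoing edge of s and is classical (length 1), and every edge (v_out, t) is classical. If the edge (x_out, t) is saturated and d(t) < ∞, then the distance from s to t under ℓ is at least 3, and the 0-th layer L_0 = {v : d(v) = 0} equals {s}. -/

import Mathlib

/-!
The function `s ↦ 0`, `v_in ↦ 1`, `w_out ↦ 1 or 2` (according as `w` is saturated or not),
`t ↦ 3` never increases along a residual edge by more than that edge's length: an edge into
an unsaturated `w_out` is classical, and an edge `(w_out, t)` leaves an unsaturated `w_out`
and is classical. Hence it bounds the distance from `s` from below; in particular `d(t) ≥ 3`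
and `d(v) ≥ 1` for every `v ≠ s`.
-/

inductive AugV (V : Type) where
  | s : AugV V
  | t : AugV V
  | inV : V → AugV V
  | outV : V → AugV V
deriving DecidableEq

/-- `CostReach R ℓ a b n`: there is a walk from `a` to `b` along edges of the
relation `R` of total length `n` under the length function `ℓ`. -/
inductive CostReach {α : Type*} (R : α → α → Prop) (ℓ : α → α → ℕ) :
    α → α → ℕ → Prop
  | refl (a : α) : CostReach R ℓ a a 0
  | tail {a b c : α} {n : ℕ} :
      CostReach R ℓ a b n → R b c → CostReach R ℓ a c (n + ℓ b c)

/-- The shortest-path distance from `a` to `b` under the length function `ℓ`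
(`⊤` if `b` is unreachable from `a`). -/
noncomputable def distLen {α : Type*} (R : α → α → Prop) (ℓ : α → α → ℕ)
    (a b : α) : ℕ∞ :=
  sInf {n : ℕ∞ | ∃ m : ℕ, CostReach R ℓ a b m ∧ n = (m : ℕ∞)}

namespace CostReach

variable {α : Type*} {R : α → α → Prop} {ℓ : α → α → ℕ}

theorem potential_le (f : α → ℕ) (hf : ∀ a b, R a b → f b ≤ f a + ℓ a b) {a b : α} {n : ℕ}
    (h : CostReach R ℓ a b n) : f b ≤ f a + n := by
  induction h with
  | refl => simp
  | tail _ hbc ih => have := hf _ _ hbc; omega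

end CostReach

section distLen

variable {α : Type*} {R : α → α → Prop} {ℓ : α → α → ℕ}

theorem distLen_self (a : α) : distLen R ℓ a a = 0 :=
  le_antisymm (sInf_le ⟨0, CostReach.refl a, rfl⟩) zero_le

theorem le_distLen {a b : α} {k : ℕ} (h : ∀ m, CostReach R ℓ a b m → k ≤ m) :
    (k : ℕ∞) ≤ distLen R ℓ a b := by
  refine le_sInf ?_
  rintro _ ⟨m, hm, rfl⟩
  exact_mod_cast h m hm

theorem le_distLen_of_potential (f : α → ℕ) (hf : ∀ a b, R a b → f b ≤ f a + ℓ a b)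
    (a b : α) : ((f b - f a : ℕ) : ℕ∞) ≤ distLen R ℓ a b :=
  le_distLen fun _ hm => by have := hm.potential_le f hf; omega

end distLen

namespace AugV

variable {V : Type}

def distLowerBound (sat : V → Prop) [DecidablePred sat] : AugV V → ℕ
  | s => 0
  | t => 3
  | inV _ => 1
  | outV w => if sat w then 1 else 2

theorem one_le_distLowerBound (sat : V → Prop) [DecidablePred sat] {v : AugV V} (hv : v ≠ s) :
    1 ≤ distLowerBound sat v := by
  cases v with
  | s => exact absurd rfl hv
  | outV w => simp only [distLowerBound]; split_ifs <;> omega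
  | _ => simp [distLowerBound]

theorem distLowerBound_le_add (Ered : AugV V → AugV V → Prop) (ℓ : AugV V → AugV V → ℕ)
    (modern : AugV V → AugV V → Prop) (sat : V → Prop) [DecidablePred sat] (x : V)
    (hclassical : ∀ a b, ¬ modern a b → ℓ a b = 1)
    (hsx_classical : ¬ modern s (outV x))
    (hvt_classical : ∀ v : V, ¬ modern (outV v) t)
    (hmodern_sat : ∀ (a : AugV V) (w : V), modern a (outV w) → sat w)
    (hsat : ∀ w : V, sat w → ¬ Ered (outV w) t)
    (hstructure : ∀ a b, Ered a b →
      (a = s ∧ b = outV x) ∨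
      (∃ v w, a = inV v ∧ b = outV w) ∨
      (∃ v w, a = outV v ∧ b = inV w) ∨
      (∃ v, a = outV v ∧ b = t) ∨
      (∃ v, a = outV v ∧ b = s) ∨
      (∃ v, a = t ∧ b = outV v))
    (hsatx : sat x) (a b : AugV V) (hab : Ered a b) :
    distLowerBound sat b ≤ distLowerBound sat a + ℓ a b := by
  rcases hstructure a b hab with ⟨rfl, rfl⟩ | ⟨v, w, rfl, rfl⟩ | ⟨v, w, rfl, rfl⟩ |
    ⟨v, rfl, rfl⟩ | ⟨v, rfl, rfl⟩ | ⟨v, rfl, rfl⟩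
  · simp [distLowerBound, hsatx, hclassical _ _ hsx_classical]
  · by_cases hw : sat w
    · simp [distLowerBound, hw]
    · have hℓ := hclassical (inV v) (outV w) fun h => hw (hmodern_sat _ _ h)
      simp [distLowerBound, hw, hℓ]
  · simp only [distLowerBound]; split_ifs <;> omega
  · have hv : ¬ sat v := fun h => hsat v h hab
    simp [distLowerBound, hv, hclassical _ _ (hvt_classical v)]
  · simp [distLowerBound]
  · simp only [distLowerBound]; split_ifs <;> omega

end AugV

theorem stmt17_general {V : Type} (Ered : AugV V → AugV V → Prop)
    (ℓ : AugV V → AugV V → ℕ) (modern : AugV V → AugV V → Prop)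
    (sat : V → Prop) (x : V)
    (hclassical : ∀ a b, ¬ modern a b → ℓ a b = 1)
    (hsx_classical : ¬ modern AugV.s (AugV.outV x))
    (hvt_classical : ∀ v : V, ¬ modern (AugV.outV v) AugV.t)
    (hmodern_sat : ∀ (a : AugV V) (w : V), modern a (AugV.outV w) → sat w)
    (hsat : ∀ w : V, sat w → ¬ Ered (AugV.outV w) AugV.t)
    (hstructure : ∀ a b, Ered a b →
      (a = AugV.s ∧ b = AugV.outV x) ∨
      (∃ v w, a = AugV.inV v ∧ b = AugV.outV w) ∨
      (∃ v w, a = AugV.outV v ∧ b = AugV.inV w) ∨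
      (∃ v, a = AugV.outV v ∧ b = AugV.t) ∨
      (∃ v, a = AugV.outV v ∧ b = AugV.s) ∨
      (∃ v, a = AugV.t ∧ b = AugV.outV v))
    (hsatx : sat x) :
    3 ≤ distLen Ered ℓ AugV.s AugV.t ∧
      {v : AugV V | distLen Ered ℓ AugV.s v = 0} = {AugV.s} := by
  classical
  have hbound (v : AugV V) : (AugV.distLowerBound sat v : ℕ∞) ≤ distLen Ered ℓ AugV.s v := by
    simpa [AugV.distLowerBound] using le_distLen_of_potential _
      (AugV.distLowerBound_le_add Ered ℓ modern sat x hclassical hsx_classical hvt_classical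
        hmodern_sat hsat hstructure hsatx) AugV.s v
  refine ⟨hbound AugV.t, Set.ext fun v => ⟨fun hv => ?_, fun hv => hv ▸ distLen_self _⟩⟩
  by_contra hne
  have hpos : (1 : ℕ∞) ≤ distLen Ered ℓ AugV.s v :=
    le_trans (by exact_mod_cast AugV.one_le_distLowerBound sat hne) (hbound v)
  exact absurd (hpos.trans_eq hv) (by simp)

/-- In the residual graph of the augmented graph under the local binary length
function `ℓ` (each residual edge is classical of length `1` or modern; every
zero-length edge is modern; `(s, x_out)` is the only outgoing edge of `s` and
is classical; every `(v_out, t)` is classical; a modern edge into `w_out`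
exists only when `(w_out, t)` is saturated), if `(x_out, t)` is saturated and
`d(t) < ∞`, then the distance from `s` to `t` is at least `3` and the `0`-th
layer `L_0 = {v : d(v) = 0}` equals `{s}`. -/
theorem stmt17 {V : Type} (Ered : AugV V → AugV V → Prop)
    (ℓ : AugV V → AugV V → ℕ) (modern : AugV V → AugV V → Prop)
    (sat : V → Prop) (x : V)
    (hbin : ∀ a b, ℓ a b ≤ 1)
    (hclassical : ∀ a b, ¬ modern a b → ℓ a b = 1)
    (hzero : ∀ a b, ℓ a b = 0 → modern a b)
    (hs_edge : ∀ a, Ered AugV.s a → a = AugV.outV x)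
    (hsx_classical : ¬ modern AugV.s (AugV.outV x))
    (hvt_classical : ∀ v : V, ¬ modern (AugV.outV v) AugV.t)
    (hmodern_sat : ∀ (a : AugV V) (w : V), modern a (AugV.outV w) → sat w)
    (hsat : ∀ w : V, sat w → ¬ Ered (AugV.outV w) AugV.t)
    (hstructure : ∀ a b, Ered a b →
      (a = AugV.s ∧ b = AugV.outV x) ∨
      (∃ v w, a = AugV.inV v ∧ b = AugV.outV w) ∨
      (∃ v w, a = AugV.outV v ∧ b = AugV.inV w) ∨
      (∃ v, a = AugV.outV v ∧ b = AugV.t) ∨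
      (∃ v, a = AugV.outV v ∧ b = AugV.s) ∨
      (∃ v, a = AugV.t ∧ b = AugV.outV v))
    (hsatx : sat x)
    (hfinite : distLen Ered ℓ AugV.s AugV.t ≠ ⊤) :
    3 ≤ distLen Ered ℓ AugV.s AugV.t ∧
      {v : AugV V | distLen Ered ℓ AugV.s v = 0} = {AugV.s} :=
  stmt17_general Ered ℓ modern sat x hclassical hsx_classical hvt_classical hmodern_sat hsat
    hstructure hsatx
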